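/- For every f ∈ C^∞(ℂⁿ), all multiindices I, J ∈ ℕⁿ, and all m, ℓ, R, S, the following inequality in [0,∞] holds: (2ℏ)^{(|I|+|J|)/2} · ‖∂^{|I|+|J|}f/(∂z^I ∂z̄^J)‖^{p,ℏ}_{m,ℓ,R,S} ≤ ‖f‖^{p,ℏ}_{m,ℓ,R+I,S+J} if ε_ℓ = +1, and (2ℏ)^{(|I|+|J|)/2} · ‖∂^{|I|+|J|}f/(∂z^I ∂z̄^J)‖^{p,ℏ}_{m,ℓ,R,S} ≤ ‖f‖^{p,ℏ}_{m,ℓ,R+J,S+I} if ε_ℓ = −1. -/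

import Mathlib

open scoped ENNReal NNReal BigOperators
open Complex

noncomputable section

namespace WickPaper

/-- functions on ℂⁿ -/
abbrev Fn (n : ℕ) := (Fin n → ℂ) → ℂ

/-- |N| = N₁+⋯+Nₙ -/
def mAbs {n : ℕ} (N : Fin n → ℕ) : ℕ := ∑ i, N i

/-- N! = N₁!⋯Nₙ! -/
def mFact {n : ℕ} (N : Fin n → ℕ) : ℕ := ∏ i, Nat.factorial (N i)

/-- componentwise binomial coefficient -/
def mChoose {n : ℕ} (R I : Fin n → ℕ) : ℕ := ∏ i, Nat.choose (R i) (I i)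

/-- Wirtinger derivative ∂/∂zᵢ -/
def wderivZ {n : ℕ} (i : Fin n) (f : Fn n) : Fn n :=
  fun z => (1/2 : ℂ) *
    (fderiv ℝ f z (Pi.single i 1) - Complex.I * fderiv ℝ f z (Pi.single i Complex.I))

/-- Wirtinger derivative ∂/∂z̄ᵢ -/
def wderivZbar {n : ℕ} (i : Fin n) (f : Fn n) : Fn n :=
  fun z => (1/2 : ℂ) *
    (fderiv ℝ f z (Pi.single i 1) + Complex.I * fderiv ℝ f z (Pi.single i Complex.I))

/-- ∂^{|R|}/∂z^R -/
def wIterZ {n : ℕ} (R : Fin n → ℕ) (f : Fn n) : Fn n :=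
  (List.finRange n).foldr (fun i g => (wderivZ i)^[R i] g) f

/-- ∂^{|S|}/∂z̄^S -/
def wIterZbar {n : ℕ} (S : Fin n → ℕ) (f : Fn n) : Fn n :=
  (List.finRange n).foldr (fun i g => (wderivZbar i)^[S i] g) f

/-- iterated Wirtinger derivative ∂^{|R|+|S|} f/(∂z^R ∂z̄^S) -/
def wD {n : ℕ} (R S : Fin n → ℕ) (f : Fn n) : Fn n :=
  wIterZ R (wIterZbar S f)

/-- the base quantity h^{p,ℏ}_{0,0,R,S}(f) -/
def h0 {n : ℕ} (p : Fin n → ℂ) (ℏ : ℝ) (R S : Fin n → ℕ) (f : Fn n) : ℝ≥0∞ :=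
  ∑' N : Fin n → ℕ,
    ENNReal.ofReal ((2*ℏ)^(mAbs R + mAbs S + mAbs N)) / (mFact N : ℝ≥0∞) *
      (‖wD R (N + S) f p‖₊ : ℝ≥0∞)^2

/-- the recursively defined quantities h^{p,ℏ}_{m,ℓ,R,S}(f) ∈ [0,∞] -/
def hSem {n : ℕ} (p : Fin n → ℂ) (ℏ : ℝ) : ℕ → ℕ → (Fin n → ℕ) → (Fin n → ℕ) → Fn n → ℝ≥0∞
  | 0, _, R, S, f => h0 p ℏ R S f
  | (m+1), ℓ, R, S, f =>
    if ℓ % 2 = 0 then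
      ∑' N : Fin n → ℕ, (mFact N : ℝ≥0∞)⁻¹ *
        (∑ I ∈ Finset.Iic R, ∑ J ∈ Finset.Iic (N + S),
          ((mChoose R I * mChoose (N + S) J : ℕ) : ℝ≥0∞) * hSem p ℏ m (ℓ / 2) I J f) ^ 2
    else
      ∑' N : Fin n → ℕ, (mFact N : ℝ≥0∞)⁻¹ *
        (∑ I ∈ Finset.Iic R, ∑ J ∈ Finset.Iic (N + S),
          ((mChoose R I * mChoose (N + S) J : ℕ) : ℝ≥0∞) * hSem p ℏ m ((ℓ - 1) / 2) J I f) ^ 2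

/-- the seminorm ‖f‖^{p,ℏ}_{m,ℓ,R,S} = (h^{p,ℏ}_{m,ℓ,R,S}(f))^{1/2^{m+1}} ∈ [0,∞] -/
def wNorm {n : ℕ} (p : Fin n → ℂ) (ℏ : ℝ) (m ℓ : ℕ) (R S : Fin n → ℕ) (f : Fn n) : ℝ≥0∞ :=
  hSem p ℏ m ℓ R S f ^ (((2:ℝ)^(m+1))⁻¹)

/-- Ã_{p,ℏ}: smooth functions all of whose seminorms are finite -/
def tA {n : ℕ} (p : Fin n → ℂ) (ℏ : ℝ) : Set (Fn n) :=
  {f | ContDiff ℝ (⊤ : ℕ∞) f ∧ ∀ (m ℓ : ℕ) (R S : Fin n → ℕ), ℓ < 2^m → wNorm p ℏ m ℓ R S f < ⊤}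

/-- a single term of the Wick product series -/
def wickTerm {n : ℕ} (α : ℂ) (N : Fin n → ℕ) (f g : Fn n) : Fn n :=
  fun z => (2*α)^(mAbs N) / (mFact N : ℂ) * wIterZ N f z * wIterZbar N g z

/-- the Wick product f ⋆_α g -/
def wick {n : ℕ} (α : ℂ) (f g : Fn n) : Fn n :=
  fun z => ∑' N : Fin n → ℕ, wickTerm α N f g z


/-- the sign ε_ℓ = (−1)^{ℓ_{m−1}+⋯+ℓ₀} determined by the binary digits of ℓ. -/
def epsSign (ℓ : ℕ) : ℤ := (-1 : ℤ)^((Nat.bits ℓ).count true)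


variable {n : ℕ}

def Dd (v : Fin n → ℂ) (f : Fn n) : Fn n := fun z => fderiv ℝ f z v

lemma Dd_smooth {f : Fn n} (hf : ContDiff ℝ (⊤ : ℕ∞) f) (v : Fin n → ℂ) :
    ContDiff ℝ (⊤ : ℕ∞) (Dd v f) := by
  exact (ContinuousLinearMap.apply ℝ ℂ v).contDiff.comp (hf.fderiv_right (by simp))

lemma Dd_comm {f : Fn n} (hf : ContDiff ℝ (⊤ : ℕ∞) f) (v w : Fin n → ℂ) :
    Dd v (Dd w f) = Dd w (Dd v f) := by
  funext z
  have hdf : Differentiable ℝ f := hf.differentiable (by simp)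
  have hdff : Differentiable ℝ (fderiv ℝ f) :=
    (hf.fderiv_right (m := (⊤ : ℕ∞)) ((by simp))).differentiable (by simp)
  have key : ∀ v w : Fin n → ℂ,
      Dd v (Dd w f) z = fderiv ℝ (fderiv ℝ f) z v w := by
    intro v w
    have : Dd w f = (ContinuousLinearMap.apply ℝ ℂ w) ∘ (fderiv ℝ f) := rfl
    rw [Dd, this, fderiv_comp z ((ContinuousLinearMap.apply ℝ ℂ w).differentiableAt)
      (hdff z)]
    simp
  rw [key, key, second_derivative_symmetric (f := f) (fun y => (hdf y).hasFDerivAt)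
    ((hdff z).hasFDerivAt) w v]

def Wop (a b : ℂ) (i : Fin n) (f : Fn n) : Fn n :=
  fun z => a * Dd (Pi.single i 1) f z + b * Dd (Pi.single i Complex.I) f z

lemma Wop_smooth {f : Fn n} (hf : ContDiff ℝ (⊤ : ℕ∞) f) (a b : ℂ) (i : Fin n) :
    ContDiff ℝ (⊤ : ℕ∞) (Wop a b i f) :=
  ((contDiff_const.mul (Dd_smooth hf _)).add (contDiff_const.mul (Dd_smooth hf _)))

lemma Dd_Wop {f : Fn n} (hf : ContDiff ℝ (⊤ : ℕ∞) f) (a b : ℂ) (i : Fin n) (v : Fin n → ℂ) :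
    Dd v (Wop a b i f) = fun z =>
      a * Dd v (Dd (Pi.single i 1) f) z + b * Dd v (Dd (Pi.single i Complex.I) f) z := by
  funext z
  have h1 : DifferentiableAt ℝ (Dd (Pi.single i (1:ℂ)) f) z :=
    (Dd_smooth hf _).differentiable (by simp) z
  have h2 : DifferentiableAt ℝ (Dd (Pi.single i Complex.I) f) z :=
    (Dd_smooth hf _).differentiable (by simp) z
  have : Dd v (Wop a b i f) z =
      (fderiv ℝ (fun z => a * Dd (Pi.single i 1) f z) z
        + fderiv ℝ (fun z => b * Dd (Pi.single i Complex.I) f z) z) v := by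
    show fderiv ℝ (fun z => a * Dd (Pi.single i 1) f z + b * Dd (Pi.single i Complex.I) f z) z v = _
    rw [← fderiv_add (h1.const_mul a) (h2.const_mul b)]; rfl
  rw [this, fderiv_const_mul h1 a, fderiv_const_mul h2 b]
  simp [Dd]

lemma Wop_comm {f : Fn n} (hf : ContDiff ℝ (⊤ : ℕ∞) f) (a b c d : ℂ) (i j : Fin n) :
    Wop a b i (Wop c d j f) = Wop c d j (Wop a b i f) := by
  funext z
  simp only [Wop, Dd_Wop hf]
  rw [Dd_comm hf, Dd_comm hf (Pi.single i 1), Dd_comm hf (Pi.single i Complex.I) (Pi.single j 1), Dd_comm hf (Pi.single i Complex.I) (Pi.single j Complex.I)]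
  ring

-- the operator family
def op (b : Bool) (i : Fin n) : Fn n → Fn n :=
  match b with
  | false => wderivZ i
  | true => wderivZbar i

lemma op_eq_Wop (b : Bool) (i : Fin n) (f : Fn n) :
    op b i f = Wop (1/2) (if b then Complex.I/2 else -(Complex.I/2)) i f := by
  cases b <;> · funext z; simp [op, wderivZ, wderivZbar, Wop, Dd]; ring

def Good (T : Fn n → Fn n) : Prop :=
  (∀ f, ContDiff ℝ (⊤ : ℕ∞) f → ContDiff ℝ (⊤ : ℕ∞) (T f)) ∧
  ∀ (b : Bool) (i : Fin n) (f : Fn n), ContDiff ℝ (⊤ : ℕ∞) f → op b i (T f) = T (op b i f)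

lemma good_id : Good (n := n) id := ⟨fun _ h => h, fun _ _ _ _ => rfl⟩

lemma good_op (b : Bool) (i : Fin n) : Good (op b i) := by
  constructor
  · intro f hf; rw [op_eq_Wop]; exact Wop_smooth hf _ _ _
  · intro b' i' f hf
    rw [op_eq_Wop, op_eq_Wop, op_eq_Wop b i (op b' i' f), op_eq_Wop b' i' f,
      Wop_comm hf]

lemma good_comp {T U : Fn n → Fn n} (hT : Good T) (hU : Good U) :
    Good (fun f => T (U f)) := by
  refine ⟨fun f hf => hT.1 _ (hU.1 _ hf), fun b i f hf => ?_⟩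
  rw [hT.2 b i _ (hU.1 _ hf), hU.2 b i _ hf]

lemma good_iter {T : Fn n → Fn n} (hT : Good T) (k : ℕ) : Good (T^[k]) := by
  induction k with
  | zero => exact good_id
  | succ k ih =>
    rw [Function.iterate_succ']
    exact good_comp (T := T) (U := T^[k]) hT ih

def foldOp (b : Bool) (A : Fin n → ℕ) (L : List (Fin n)) (f : Fn n) : Fn n :=
  L.foldr (fun i g => (op b i)^[A i] g) f

lemma good_foldOp (b : Bool) (A : Fin n → ℕ) (L : List (Fin n)) :
    Good (foldOp b A L) := by
  induction L with
  | nil => exact good_id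
  | cons i L ih =>
    have := good_comp (good_iter (good_op b i) (A i)) ih
    exact this

lemma good_comm_iter {T : Fn n → Fn n} (hT : Good T) (b : Bool) (i : Fin n) (k : ℕ)
    {f : Fn n} (hf : ContDiff ℝ (⊤ : ℕ∞) f) :
    (op b i)^[k] (T f) = T ((op b i)^[k] f) := by
  induction k with
  | zero => rfl
  | succ k ih =>
    rw [Function.iterate_succ_apply', Function.iterate_succ_apply', ih,
      hT.2 b i _ ((good_iter (good_op b i) k).1 _ hf)]

lemma foldOp_comm {T : Fn n → Fn n} (hT : Good T) (b : Bool) (A : Fin n → ℕ)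
    (L : List (Fin n)) {f : Fn n} (hf : ContDiff ℝ (⊤ : ℕ∞) f) :
    foldOp b A L (T f) = T (foldOp b A L f) := by
  induction L with
  | nil => rfl
  | cons i L ih =>
    show (op b i)^[A i] (foldOp b A L (T f)) = T ((op b i)^[A i] (foldOp b A L f))
    rw [ih, good_comm_iter hT b i (A i) ((good_foldOp b A L).1 _ hf)]

lemma foldOp_add (b : Bool) (A B : Fin n → ℕ) (L : List (Fin n)) {f : Fn n}
    (hf : ContDiff ℝ (⊤ : ℕ∞) f) :
    foldOp b (fun i => A i + B i) L f = foldOp b A L (foldOp b B L f) := by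
  induction L with
  | nil => rfl
  | cons i L ih =>
    have hg : ContDiff ℝ (⊤ : ℕ∞) (foldOp b B L f) := (good_foldOp b B L).1 _ hf
    show (op b i)^[A i + B i] (foldOp b (fun i => A i + B i) L f)
      = (op b i)^[A i] (foldOp b A L ((op b i)^[B i] (foldOp b B L f)))
    rw [ih, Function.iterate_add_apply, foldOp_comm (good_iter (good_op b i) (B i)) b A L hg]

lemma wIterZ_eq (R : Fin n → ℕ) (f : Fn n) :
    wIterZ R f = foldOp false R (List.finRange n) f := rfl

lemma wIterZbar_eq (S : Fin n → ℕ) (f : Fn n) :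
    wIterZbar S f = foldOp true S (List.finRange n) f := rfl

lemma wD_smooth {f : Fn n} (hf : ContDiff ℝ (⊤ : ℕ∞) f) (R S : Fin n → ℕ) :
    ContDiff ℝ (⊤ : ℕ∞) (wD R S f) :=
  (good_foldOp false R (List.finRange n)).1 _ ((good_foldOp true S (List.finRange n)).1 _ hf)

lemma wD_wD {f : Fn n} (hf : ContDiff ℝ (⊤ : ℕ∞) f) (R S I J : Fin n → ℕ) :
    wD R S (wD I J f) = wD (R + I) (S + J) f := by
  have hJ : ContDiff ℝ (⊤ : ℕ∞) (foldOp true J (List.finRange n) f) :=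
    (good_foldOp true J (List.finRange n)).1 _ hf
  show foldOp false R (List.finRange n) (foldOp true S (List.finRange n)
      (foldOp false I (List.finRange n) (foldOp true J (List.finRange n) f)))
    = foldOp false (fun i => R i + I i) (List.finRange n)
      (foldOp true (fun i => S i + J i) (List.finRange n) f)
  rw [foldOp_comm (good_foldOp false I (List.finRange n)) true S (List.finRange n) hJ,
    ← foldOp_add true S J (List.finRange n) hf,
    ← foldOp_add false R I (List.finRange n)
      ((good_foldOp true (fun i => S i + J i) (List.finRange n)).1 _ hf)]

-- ## eps lemmas
lemma epsSign_zero : epsSign 0 = 1 := by simp [epsSign]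
lemma epsSign_two_mul (k : ℕ) : epsSign (2*k) = epsSign k := by
  rcases eq_or_ne k 0 with rfl | hk
  · rfl
  · rw [epsSign, epsSign, Nat.bit0_bits k hk, List.count_cons]
    simp
lemma epsSign_two_mul_add_one (k : ℕ) : epsSign (2*k+1) = -epsSign k := by
  rw [epsSign, epsSign, Nat.bit1_bits, List.count_cons]
  simp [pow_succ]

-- ## choose lemmas
lemma choose_le_choose_add (r i a : ℕ) : r.choose i ≤ (r+a).choose (i+a) := by
  induction a with
  | zero => exact le_refl _
  | succ a ih =>
    refine le_trans ih ?_
    rw [show r+(a+1) = (r+a)+1 by ring, show i+(a+1) = (i+a)+1 by ring,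
      Nat.choose_succ_succ]
    exact Nat.le_add_right _ _

lemma mChoose_le {n : ℕ} (R X A : Fin n → ℕ) : mChoose R X ≤ mChoose (R+A) (X+A) := by
  refine Finset.prod_le_prod' fun i _ => ?_
  exact choose_le_choose_add (R i) (X i) (A i)

lemma mAbs_add {n : ℕ} (X Y : Fin n → ℕ) : mAbs (X+Y) = mAbs X + mAbs Y := by
  simp [mAbs, Finset.sum_add_distrib]

-- ## step core
lemma step_core {n : ℕ} (R S A B : Fin n → ℕ) (c : ℝ≥0∞)
    (G H : (Fin n → ℕ) → (Fin n → ℕ) → ℝ≥0∞)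
    (hGH : ∀ X Y, c * G X Y ≤ H (X + A) (Y + B)) :
    c^2 * ∑' N : Fin n → ℕ, (mFact N : ℝ≥0∞)⁻¹ *
        (∑ I' ∈ Finset.Iic R, ∑ J' ∈ Finset.Iic (N + S),
          ((mChoose R I' * mChoose (N + S) J' : ℕ) : ℝ≥0∞) * G I' J') ^ 2
      ≤ ∑' N : Fin n → ℕ, (mFact N : ℝ≥0∞)⁻¹ *
        (∑ I' ∈ Finset.Iic (R + A), ∑ J' ∈ Finset.Iic (N + (S + B)),
          ((mChoose (R + A) I' * mChoose (N + (S + B)) J' : ℕ) : ℝ≥0∞) * H I' J') ^ 2 := by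
  rw [← ENNReal.tsum_mul_left]
  refine ENNReal.tsum_le_tsum fun N => ?_
  rw [show N + (S + B) = (N + S) + B from (add_assoc N S B).symm]
  rw [← mul_assoc, mul_comm (c^2), mul_assoc]
  refine mul_le_mul_right ?_ _
  rw [← mul_pow]
  refine pow_le_pow_left' ?_ 2
  set s := Finset.Iic R ×ˢ Finset.Iic (N + S) with hs
  set e : ((Fin n → ℕ) × (Fin n → ℕ)) → ((Fin n → ℕ) × (Fin n → ℕ)) :=
    fun q => (q.1 + A, q.2 + B) with he
  set F : ((Fin n → ℕ) × (Fin n → ℕ)) → ℝ≥0∞ := fun q =>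
    ((mChoose (R+A) q.1 * mChoose (N+S+B) q.2 : ℕ) : ℝ≥0∞) * H q.1 q.2 with hF
  have h1 : c * (∑ I' ∈ Finset.Iic R, ∑ J' ∈ Finset.Iic (N + S),
      ((mChoose R I' * mChoose (N + S) J' : ℕ) : ℝ≥0∞) * G I' J')
      = ∑ q ∈ s, ((mChoose R q.1 * mChoose (N + S) q.2 : ℕ) : ℝ≥0∞) * (c * G q.1 q.2) := by
    rw [Finset.sum_product, Finset.mul_sum]
    exact Finset.sum_congr rfl fun I' _ => by
      rw [Finset.mul_sum]
      exact Finset.sum_congr rfl fun J' _ => (mul_left_comm _ _ _)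
  have h2 : ∑ q ∈ s, ((mChoose R q.1 * mChoose (N + S) q.2 : ℕ) : ℝ≥0∞) * (c * G q.1 q.2)
      ≤ ∑ q ∈ s, F (e q) := by
    refine Finset.sum_le_sum fun q hq => ?_
    refine mul_le_mul' ?_ (hGH q.1 q.2)
    exact_mod_cast Nat.mul_le_mul (mChoose_le R q.1 A) (mChoose_le (N+S) q.2 B)
  have hinj : ∀ x ∈ s, ∀ y ∈ s, e x = e y → x = y := by
    intro x _ y _ hxy
    rw [he, Prod.ext_iff] at hxy
    exact Prod.ext (add_left_injective A hxy.1) (add_left_injective B hxy.2)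
  have h3 : ∑ q ∈ s, F (e q) = ∑ q ∈ s.image e, F q := (Finset.sum_image hinj).symm
  have h4 : s.image e ⊆ Finset.Iic (R + A) ×ˢ Finset.Iic ((N + S) + B) := by
    intro q hq
    obtain ⟨x, hx, rfl⟩ := Finset.mem_image.mp hq
    rw [hs, Finset.mem_product, Finset.mem_Iic, Finset.mem_Iic] at hx
    rw [Finset.mem_product, Finset.mem_Iic, Finset.mem_Iic]
    exact ⟨add_le_add_left hx.1 A, add_le_add_left hx.2 B⟩
  calc c * _ = _ := h1
    _ ≤ ∑ q ∈ s, F (e q) := h2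
    _ = ∑ q ∈ s.image e, F q := h3
    _ ≤ ∑ q ∈ Finset.Iic (R + A) ×ˢ Finset.Iic ((N + S) + B), F q :=
        Finset.sum_le_sum_of_subset h4
    _ = _ := by rw [Finset.sum_product]

-- ## base case
lemma base_eq {n : ℕ} (p : Fin n → ℂ) (ℏ : ℝ) (hℏ : 0 < ℏ) {f : Fn n}
    (hf : ContDiff ℝ (⊤ : ℕ∞) f) (I J R S : Fin n → ℕ) :
    ENNReal.ofReal ((2*ℏ)^(mAbs I + mAbs J)) * h0 p ℏ R S (wD I J f)
      = h0 p ℏ (R+I) (S+J) f := by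
  rw [h0, h0, ← ENNReal.tsum_mul_left]
  refine tsum_congr fun N => ?_
  rw [wD_wD hf R (N+S) I J, show (N+S)+J = N+(S+J) from add_assoc N S J,
    div_eq_mul_inv, div_eq_mul_inv, ← mul_assoc, ← mul_assoc]
  congr 2
  rw [← ENNReal.ofReal_mul (by positivity), ← pow_add]
  congr 1
  rw [mAbs_add, mAbs_add]
  ring

lemma hSem_succ {n : ℕ} (p : Fin n → ℂ) (ℏ : ℝ) (m ℓ : ℕ) (R S : Fin n → ℕ) (f : Fn n) :
    hSem p ℏ (m+1) ℓ R S f =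
    if ℓ % 2 = 0 then
      ∑' N : Fin n → ℕ, (mFact N : ℝ≥0∞)⁻¹ *
        (∑ I ∈ Finset.Iic R, ∑ J ∈ Finset.Iic (N + S),
          ((mChoose R I * mChoose (N + S) J : ℕ) : ℝ≥0∞) * hSem p ℏ m (ℓ / 2) I J f) ^ 2
    else
      ∑' N : Fin n → ℕ, (mFact N : ℝ≥0∞)⁻¹ *
        (∑ I ∈ Finset.Iic R, ∑ J ∈ Finset.Iic (N + S),
          ((mChoose R I * mChoose (N + S) J : ℕ) : ℝ≥0∞) * hSem p ℏ m ((ℓ - 1) / 2) J I f) ^ 2 := by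
  rw [hSem]

lemma key_lemma {n : ℕ} (p : Fin n → ℂ) (ℏ : ℝ) (hℏ : 0 < ℏ) {f : Fn n}
    (hf : ContDiff ℝ (⊤ : ℕ∞) f) (I J : Fin n → ℕ) :
    ∀ m : ℕ, ∀ ℓ < 2^m, ∀ R S : Fin n → ℕ,
      (epsSign ℓ = 1 →
        (ENNReal.ofReal ((2*ℏ)^(mAbs I + mAbs J)))^(2^m) * hSem p ℏ m ℓ R S (wD I J f)
          ≤ hSem p ℏ m ℓ (R+I) (S+J) f) ∧
      (epsSign ℓ = -1 →
        (ENNReal.ofReal ((2*ℏ)^(mAbs I + mAbs J)))^(2^m) * hSem p ℏ m ℓ R S (wD I J f)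
          ≤ hSem p ℏ m ℓ (R+J) (S+I) f) := by
  set c := ENNReal.ofReal ((2*ℏ)^(mAbs I + mAbs J)) with hc
  intro m
  induction m with
  | zero =>
    intro ℓ hℓ R S
    have hℓ0 : ℓ = 0 := by omega
    subst hℓ0
    constructor
    · intro _
      rw [pow_zero, pow_one]
      exact le_of_eq (base_eq p ℏ hℏ hf I J R S)
    · intro h; rw [epsSign_zero] at h; exact absurd h (by decide)
  | succ m ih =>
    intro ℓ hℓ R S
    have h2 : 2^(m+1) = 2 * 2^m := by rw [pow_succ]; ring
    have hk : ℓ / 2 < 2^m := by omega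
    have hpow : c^(2^(m+1)) = (c^(2^m))^2 := by rw [← pow_mul, pow_succ]
    rcases Nat.even_or_odd ℓ with heven | hodd
    · have hmod : ℓ % 2 = 0 := Nat.even_iff.mp heven
      have hrep : ℓ = 2 * (ℓ/2) := by omega
      have heps : epsSign ℓ = epsSign (ℓ/2) := by
        conv_lhs => rw [hrep]
        rw [epsSign_two_mul]
      constructor
      · intro h1
        have hGH := fun X Y => (ih (ℓ/2) hk X Y).1 (by rw [← heps]; exact h1)
        rw [hSem_succ, hSem_succ, if_pos hmod, if_pos hmod, hpow]
        exact step_core R S I J (c^(2^m))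
          (fun X Y => hSem p ℏ m (ℓ/2) X Y (wD I J f))
          (fun X Y => hSem p ℏ m (ℓ/2) X Y f) hGH
      · intro h1
        have hGH := fun X Y => (ih (ℓ/2) hk X Y).2 (by rw [← heps]; exact h1)
        rw [hSem_succ, hSem_succ, if_pos hmod, if_pos hmod, hpow]
        exact step_core R S J I (c^(2^m))
          (fun X Y => hSem p ℏ m (ℓ/2) X Y (wD I J f))
          (fun X Y => hSem p ℏ m (ℓ/2) X Y f) hGH
    · have hmod : ¬ (ℓ % 2 = 0) := by
        have := Nat.odd_iff.mp hodd; omega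
      have hrep : ℓ = 2 * (ℓ/2) + 1 := by
        have := Nat.odd_iff.mp hodd; omega
      have hd : (ℓ - 1) / 2 = ℓ / 2 := by omega
      have heps : epsSign ℓ = -epsSign (ℓ/2) := by
        conv_lhs => rw [hrep]
        rw [epsSign_two_mul_add_one]
      constructor
      · intro h1
        have hs : epsSign (ℓ/2) = -1 := by
          rw [heps] at h1; omega
        have hGH := fun X Y => (ih (ℓ/2) hk Y X).2 hs
        rw [hSem_succ, hSem_succ, if_neg hmod, if_neg hmod, hd, hpow]
        exact step_core R S I J (c^(2^m))
          (fun X Y => hSem p ℏ m (ℓ/2) Y X (wD I J f))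
          (fun X Y => hSem p ℏ m (ℓ/2) Y X f) hGH
      · intro h1
        have hs : epsSign (ℓ/2) = 1 := by
          rw [heps] at h1; omega
        have hGH := fun X Y => (ih (ℓ/2) hk Y X).1 hs
        rw [hSem_succ, hSem_succ, if_neg hmod, if_neg hmod, hd, hpow]
        exact step_core R S J I (c^(2^m))
          (fun X Y => hSem p ℏ m (ℓ/2) Y X (wD I J f))
          (fun X Y => hSem p ℏ m (ℓ/2) Y X f) hGH

lemma norm_wrap {h h' : ℝ≥0∞} {t : ℝ} (ht : 0 < t) (m : ℕ)
    (hle : (ENNReal.ofReal t)^(2^m) * h ≤ h') :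
    ENNReal.ofReal (Real.sqrt t) * h ^ (((2:ℝ)^(m+1))⁻¹) ≤ h' ^ (((2:ℝ)^(m+1))⁻¹) := by
  have e_nonneg : (0:ℝ) ≤ ((2:ℝ)^(m+1))⁻¹ := by positivity
  have hmono := ENNReal.rpow_le_rpow hle e_nonneg
  rw [ENNReal.mul_rpow_of_nonneg _ _ e_nonneg] at hmono
  refine le_trans (le_of_eq ?_) hmono
  congr 1
  rw [← ENNReal.rpow_natCast (ENNReal.ofReal t) (2^m), ← ENNReal.rpow_mul]
  have hexp : ((2^m : ℕ) : ℝ) * ((2:ℝ)^(m+1))⁻¹ = (1:ℝ)/2 := by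
    push_cast
    rw [pow_succ]
    field_simp
  rw [hexp, ENNReal.ofReal_rpow_of_pos ht, Real.sqrt_eq_rpow]


/-- continuity of the partial derivatives. -/
theorem partial_derivatives_continuous {n : ℕ} (hn : 1 ≤ n)
    (p : Fin n → ℂ) (ℏ : ℝ) (hℏ : 0 < ℏ)
    (f : Fn n) (hf : ContDiff ℝ (⊤ : ℕ∞) f)
    (m ℓ : ℕ) (hℓ : ℓ < 2^m) (I J R S : Fin n → ℕ) :
    (epsSign ℓ = 1 →
      ENNReal.ofReal (Real.sqrt ((2*ℏ)^(mAbs I + mAbs J))) *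
          wNorm p ℏ m ℓ R S (wD I J f) ≤
        wNorm p ℏ m ℓ (R + I) (S + J) f) ∧
    (epsSign ℓ = -1 →
      ENNReal.ofReal (Real.sqrt ((2*ℏ)^(mAbs I + mAbs J))) *
          wNorm p ℏ m ℓ R S (wD I J f) ≤
        wNorm p ℏ m ℓ (R + J) (S + I) f) := by
  constructor
  · intro hsign
    have key := (key_lemma p ℏ hℏ hf I J m ℓ hℓ R S).1 hsign
    simp only [wNorm]
    exact norm_wrap (pow_pos (by linarith) _) m key
  · intro hsign
    have key := (key_lemma p ℏ hℏ hf I J m ℓ hℓ R S).2 hsign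
    simp only [wNorm]
    exact norm_wrap (pow_pos (by linarith) _) m key

end WickPaper
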